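/- Let n ≥ 1 be an integer and ν a real number that is not an integer. Then the function θ ↦ f_n(ν,θ) satisfies the differential equation sin θ · f″(θ) − 2(n−1) cos θ · f′(θ) − ((n−1)² − ν²) sin θ · f(θ) = 0 for all real θ, together with f_n(ν, π/2) = 1 and f_n(ν, 0) = 0. -/

import Mathlib

open Real

/-- The coefficient `a_k^n(ν)` from the paper (empty products equal 1). -/
noncomputable def lommelA (n k : ℕ) (ν : ℝ) : ℝ :=
  (2 : ℝ) ^ (1 - (n : ℤ)) *
    (∏ p ∈ Finset.Icc 1 (n - 1), (ν - n + 2 * (p : ℝ) + 1) / (ν - p + 1)) *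
    ∏ q ∈ Finset.Icc 1 k, (((n : ℝ) - q) * ((q : ℝ) + ν - n)) / ((q : ℝ) * ((q : ℝ) + ν))

/-- The function `f_n(ν,θ)` from the paper. -/
noncomputable def lommelF (n : ℕ) (ν θ : ℝ) : ℝ :=
  ∑ k ∈ Finset.range n, lommelA n k ν *
    Real.sin ((ν - n + 2 * (k : ℝ) + 1) * θ) /
      Real.sin ((ν - n + 2 * (k : ℝ) + 1) * π / 2)

/-!
With `ω_k = ν - n + 2k + 1` and `c_k = a_k / sin (ω_k π / 2)` we have `f = ∑ c_k sin (ω_k θ)`.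
By the product-to-sum formulas the differential operator sends `c_k sin (ω_k θ)` to a combination of
`cos ((ω_k - 1) θ)` and `cos ((ω_k + 1) θ) = cos ((ω_{k+1} - 1) θ)`; the ratio `a_{k+1} / a_k`
together with `sin (ω_{k+1} π / 2) = - sin (ω_k π / 2)` makes the sum telescope, and both boundary
terms vanish (the first carries the factor `k = 0`, the last the factor `a_n = 0`).

At `θ = π / 2` the value is `∑ a_k`, a terminating `₂F₁(1 - n, ν - n + 1; ν + 1; -1)`
(Kummer's sum). That it equals `1` follows from a Wilf–Zeilberger telescoping relating the sums
for `n` and `n + 2`.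
-/

open Finset

lemma prod_Icc_one_eq_prod_range {M : Type*} [CommMonoid M] (f : ℕ → M) (l : ℕ) :
    ∏ p ∈ Icc 1 l, f p = ∏ j ∈ range l, f (j + 1) := by
  rw [← Ico_add_one_right_eq_Icc, prod_Ico_eq_prod_range]
  simp [add_comm]

section Coefficients

lemma lommelA_succ (n k : ℕ) (ν : ℝ) :
    lommelA n (k + 1) ν = lommelA n k ν *
      (((n : ℝ) - (k + 1)) * ((k + 1 : ℝ) + ν - n) / (((k : ℝ) + 1) * ((k + 1 : ℝ) + ν))) := by
  unfold lommelA
  rw [prod_Icc_succ_top (Nat.succ_le_succ k.zero_le)]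
  push_cast
  ring

lemma lommelA_eq_zero_of_le {n k : ℕ} (hn : 1 ≤ n) (hk : n ≤ k) (ν : ℝ) : lommelA n k ν = 0 := by
  unfold lommelA
  rw [prod_eq_zero (mem_Icc.mpr ⟨hn, hk⟩) (by simp)]
  ring

variable {ν : ℝ}

lemma lommelA_succ_mul (hν : ∀ m : ℤ, ν ≠ m) (n k : ℕ) :
    ((k : ℝ) + 1) * ((k + 1 : ℝ) + ν) * lommelA n (k + 1) ν
      = ((n : ℝ) - (k + 1)) * ((k + 1 : ℝ) + ν - n) * lommelA n k ν := by
  have hk : (k : ℝ) + 1 ≠ 0 := by positivity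
  have hkν : (k + 1 : ℝ) + ν ≠ 0 := fun h => hν (-(k + 1)) (by push_cast; linarith)
  rw [lommelA_succ]
  field_simp

lemma lommelA_zero_add_two (hν : ∀ m : ℤ, ν ≠ m) {n : ℕ} (hn : 1 ≤ n) :
    4 * (ν - n) * lommelA (n + 2) 0 ν = (ν + n + 1) * lommelA n 0 ν := by
  obtain ⟨m, rfl⟩ : ∃ m, n = m + 1 := ⟨n - 1, by omega⟩
  have hnum : ∏ j ∈ range (m + 2), (ν - ((m + 1 + 2 : ℕ) : ℝ) + 2 * ((j + 1 : ℕ) : ℝ) + 1)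
      = (ν - m) * (ν + m + 2) *
        ∏ j ∈ range m, (ν - ((m + 1 : ℕ) : ℝ) + 2 * ((j + 1 : ℕ) : ℝ) + 1) := by
    rw [prod_range_succ', prod_range_succ]
    push_cast
    ring_nf
  have hden : ∏ j ∈ range (m + 2), (ν - ((j + 1 : ℕ) : ℝ) + 1)
      = (ν - m) * (ν - m - 1) * ∏ j ∈ range m, (ν - ((j + 1 : ℕ) : ℝ) + 1) := by
    rw [prod_range_succ, prod_range_succ]
    push_cast
    ring
  have hm : ν - m ≠ 0 := fun h => hν m (by push_cast; linarith)
  have hm1 : ν - m - 1 ≠ 0 := fun h => hν (m + 1) (by push_cast; linarith)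
  have hD : ∏ j ∈ range m, (ν - ((j + 1 : ℕ) : ℝ) + 1) ≠ 0 :=
    prod_ne_zero_iff.mpr fun j _ h => hν j (by push_cast at h ⊢; linarith)
  have hpow : (2 : ℝ) ^ (1 - ((m + 1 + 2 : ℕ) : ℤ)) = (2 : ℝ) ^ (1 - ((m + 1 : ℕ) : ℤ)) / 4 := by
    rw [show 1 - ((m + 1 + 2 : ℕ) : ℤ) = 1 - ((m + 1 : ℕ) : ℤ) - 2 by push_cast; ring,
      zpow_sub₀ two_ne_zero]
    norm_num
  simp only [lommelA, prod_empty, Nat.add_sub_cancel, show m + 2 + 1 - 1 = m + 2 by omega,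
    Icc_eq_empty_of_lt Nat.zero_lt_one, prod_Icc_one_eq_prod_range, prod_div_distrib,
    hnum, hden, hpow]
  field_simp
  push_cast
  ring

lemma lommelA_add_two (hν : ∀ m : ℤ, ν ≠ m) {n : ℕ} (hn : 1 ≤ n) (k : ℕ) :
    4 * ((n : ℝ) - k) * ((n : ℝ) + 1 - k) * ((k : ℝ) + ν - n - 1) * ((k : ℝ) + ν - n) *
        lommelA (n + 2) k ν
      = n * (n + 1) * (ν + n + 1) * (ν - n - 1) * lommelA n k ν := by
  induction k with
  | zero =>
    push_cast
    linear_combination (n * (n + 1) * (ν - n - 1) : ℝ) * lommelA_zero_add_two hν hn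
  | succ k ih =>
    have hk : (k : ℝ) + 1 ≠ 0 := by positivity
    have hkν : (k + 1 : ℝ) + ν ≠ 0 := fun h => hν (-(k + 1)) (by push_cast; linarith)
    have h₂ := lommelA_succ_mul hν (n + 2) k
    have h₀ := lommelA_succ_mul hν n k
    refine mul_left_cancel₀ (mul_ne_zero hk hkν) ?_
    push_cast at h₂ h₀ ih ⊢
    linear_combination (4 * ((n : ℝ) - k - 1) * (n - k) * (k + ν - n) * (k + ν - n + 1)) * h₂
      - (n * (n + 1) * (ν + n + 1) * (ν - n - 1) : ℝ) * h₀
      + ((n : ℝ) - k - 1) * (k + 1 + ν - n) * ih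

lemma sum_lommelA_add_two (hν : ∀ m : ℤ, ν ≠ m) {n : ℕ} (hn : 1 ≤ n) :
    ∑ k ∈ range (n + 2), lommelA (n + 2) k ν = ∑ k ∈ range n, lommelA n k ν := by
  set μ : ℝ := n * (n + 1) * (ν + n + 1) * (ν - n - 1)
  have hμ : μ ≠ 0 := by
    have h₁ : ν + n + 1 ≠ 0 := fun h => hν (-(n + 1)) (by push_cast; linarith)
    have h₂ : ν - n - 1 ≠ 0 := fun h => hν (n + 1) (by push_cast; linarith)
    have : (n : ℝ) ≠ 0 := by positivity
    positivity
  -- a Wilf–Zeilberger certificate, found by Zeilberger's algorithm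
  set g : ℕ → ℝ := fun k => 2 * k * (k + ν) *
    (k ^ 2 + (ν - 3 * n - 2) * k + ((5 * n + 2) * (n + 1) - ν * (3 * n + 2)) / 2) *
    lommelA (n + 2) k ν
  have hg : ∀ k, μ * (lommelA (n + 2) k ν - lommelA n k ν) = g (k + 1) - g k := by
    intro k
    have h₁ := lommelA_succ_mul hν (n + 2) k
    have h₂ := lommelA_add_two hν hn k
    simp only [g, μ]
    push_cast at h₁ h₂ ⊢
    linear_combination h₂ - (2 * (((k : ℝ) + 1) ^ 2 + (ν - 3 * n - 2) * (k + 1)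
      + ((5 * n + 2) * (n + 1) - ν * (3 * n + 2)) / 2)) * h₁
  have htel : μ * ∑ k ∈ range (n + 2), (lommelA (n + 2) k ν - lommelA n k ν) = 0 := by
    rw [mul_sum, sum_congr rfl fun k _ => hg k, sum_range_sub]
    simp [g, lommelA_eq_zero_of_le (by omega : 1 ≤ n + 2) le_rfl]
  rw [sum_sub_distrib, mul_eq_zero, or_iff_right hμ, sub_eq_zero] at htel
  rw [htel, sum_range_succ, sum_range_succ, lommelA_eq_zero_of_le hn le_rfl,
    lommelA_eq_zero_of_le hn (Nat.le_succ n), add_zero, add_zero]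

lemma sum_lommelA (hν : ∀ m : ℤ, ν ≠ m) {n : ℕ} (hn : 1 ≤ n) :
    ∑ k ∈ range n, lommelA n k ν = 1 := by
  obtain ⟨m, rfl⟩ : ∃ m, n = m + 1 := ⟨n - 1, by omega⟩
  clear hn
  induction m using Nat.twoStepInduction with
  | zero => simp [lommelA]
  | one =>
    have h₀ : ν ≠ 0 := fun h => hν 0 (by simpa using h)
    have h₁ : 1 + ν ≠ 0 := fun h => hν (-1) (by push_cast; linarith)
    have ha₀ : lommelA 2 0 ν = (ν + 1) / (2 * ν) := by
      norm_num [lommelA]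
      ring
    rw [sum_range_succ, sum_range_one, lommelA_succ, ha₀]
    push_cast
    field_simp [h₁]
    ring
  | more m ih _ => rwa [← sum_lommelA_add_two hν (Nat.le_add_left 1 m)] at ih

end Coefficients

section TrigonometricSums

open Real

variable {ι : Type*} (s : Finset ι) (c ω : ι → ℝ)

lemma hasDerivAt_sum_mul_sin (θ : ℝ) :
    HasDerivAt (fun θ => ∑ i ∈ s, c i * sin (ω i * θ)) (∑ i ∈ s, c i * ω i * cos (ω i * θ)) θ := by
  refine HasDerivAt.fun_sum fun i _ => ?_
  simpa [mul_assoc, mul_comm] using (((hasDerivAt_id θ).const_mul (ω i)).sin).const_mul (c i)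

lemma hasDerivAt_sum_mul_cos (θ : ℝ) :
    HasDerivAt (fun θ => ∑ i ∈ s, c i * cos (ω i * θ)) (-∑ i ∈ s, c i * ω i * sin (ω i * θ)) θ := by
  rw [← sum_neg_distrib]
  refine HasDerivAt.fun_sum fun i _ => ?_
  simpa [mul_assoc, mul_comm] using (((hasDerivAt_id θ).const_mul (ω i)).cos).const_mul (c i)

lemma deriv_sum_mul_sin :
    deriv (fun θ => ∑ i ∈ s, c i * sin (ω i * θ)) = fun θ => ∑ i ∈ s, c i * ω i * cos (ω i * θ) :=
  funext fun θ => (hasDerivAt_sum_mul_sin s c ω θ).deriv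

lemma iteratedDeriv_two_sum_mul_sin :
    iteratedDeriv 2 (fun θ => ∑ i ∈ s, c i * sin (ω i * θ))
      = fun θ => -∑ i ∈ s, c i * ω i ^ 2 * sin (ω i * θ) := by
  rw [iteratedDeriv_succ, iteratedDeriv_one, deriv_sum_mul_sin]
  funext θ
  simpa [pow_two, mul_assoc] using (hasDerivAt_sum_mul_cos s (fun i => c i * ω i) ω θ).deriv

lemma sum_mul_sin_ode (m ν θ : ℝ) :
    sin θ * (-∑ i ∈ s, c i * ω i ^ 2 * sin (ω i * θ))
        - 2 * m * cos θ * ∑ i ∈ s, c i * ω i * cos (ω i * θ)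
        - (m ^ 2 - ν ^ 2) * sin θ * ∑ i ∈ s, c i * sin (ω i * θ)
      = ∑ i ∈ s, c i * (((ω i - m) ^ 2 - ν ^ 2) / 2 * cos ((ω i + 1) * θ)
          - ((ω i + m) ^ 2 - ν ^ 2) / 2 * cos ((ω i - 1) * θ)) := by
  simp only [mul_neg, mul_sum, ← sum_neg_distrib, ← sum_sub_distrib]
  refine sum_congr rfl fun i _ => ?_
  rw [add_one_mul, sub_one_mul, cos_add, cos_sub]
  ring

end TrigonometricSums

section LommelF

open Real

variable {ν : ℝ}

noncomputable def lommelCoeff (n k : ℕ) (ν : ℝ) : ℝ :=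
  lommelA n k ν / sin ((ν - n + 2 * k + 1) * π / 2)

lemma lommelF_eq_sum (n : ℕ) (ν : ℝ) :
    lommelF n ν = fun θ => ∑ k ∈ range n, lommelCoeff n k ν * sin ((ν - n + 2 * k + 1) * θ) :=
  funext fun _ => sum_congr rfl fun _ _ => mul_div_right_comm _ _ _

lemma sin_mul_pi_div_two_ne_zero (hν : ∀ m : ℤ, ν ≠ m) (n k : ℕ) :
    sin ((ν - n + 2 * k + 1) * π / 2) ≠ 0 := by
  rw [Ne, sin_eq_zero_iff]
  rintro ⟨j, hj⟩
  have : (2 * j : ℝ) = ν - n + 2 * k + 1 := by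
    apply mul_right_cancel₀ pi_ne_zero
    linarith
  exact hν (2 * j + n - 2 * k - 1) (by push_cast; linarith)

lemma lommelCoeff_succ_mul (hν : ∀ m : ℤ, ν ≠ m) (n k : ℕ) :
    ((k : ℝ) + 1) * ((k + 1 : ℝ) + ν) * lommelCoeff n (k + 1) ν
      = ((n : ℝ) - 1 - k) * ((n : ℝ) - 1 - k - ν) * lommelCoeff n k ν := by
  have hsin := sin_mul_pi_div_two_ne_zero hν n k
  have hflip : sin ((ν - n + 2 * ((k + 1 : ℕ) : ℝ) + 1) * π / 2)
      = -sin ((ν - n + 2 * k + 1) * π / 2) := by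
    rw [← sin_add_pi]
    push_cast
    ring_nf
  have h := lommelA_succ_mul hν n k
  rw [lommelCoeff, lommelCoeff, hflip, div_neg, mul_neg, ← mul_div_assoc, ← mul_div_assoc, h,
    ← neg_div, div_left_inj' hsin]
  ring

lemma lommelF_ode (hν : ∀ m : ℤ, ν ≠ m) {n : ℕ} (hn : 1 ≤ n) (θ : ℝ) :
    sin θ * iteratedDeriv 2 (lommelF n ν) θ - 2 * ((n : ℝ) - 1) * cos θ * deriv (lommelF n ν) θ
      - (((n : ℝ) - 1) ^ 2 - ν ^ 2) * sin θ * lommelF n ν θ = 0 := by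
  rw [lommelF_eq_sum, iteratedDeriv_two_sum_mul_sin, deriv_sum_mul_sin]
  dsimp only
  rw [sum_mul_sin_ode]
  set G : ℕ → ℝ := fun k => lommelCoeff n k ν *
    (((ν - n + 2 * k + 1 + (n - 1)) ^ 2 - ν ^ 2) / 2 * cos ((ν - n + 2 * k + 1 - 1) * θ))
  have hG : ∀ k, lommelCoeff n k ν *
      (((ν - n + 2 * k + 1 - (n - 1)) ^ 2 - ν ^ 2) / 2 * cos ((ν - n + 2 * k + 1 + 1) * θ)
        - ((ν - n + 2 * k + 1 + (n - 1)) ^ 2 - ν ^ 2) / 2 * cos ((ν - n + 2 * k + 1 - 1) * θ))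
      = G (k + 1) - G k := by
    intro k
    have h := lommelCoeff_succ_mul hν n k
    simp only [G]
    push_cast
    rw [show (ν - n + 2 * (k + 1) + 1 - 1) * θ = (ν - n + 2 * k + 1 + 1) * θ by ring]
    linear_combination (-2 * cos ((ν - n + 2 * k + 1 + 1) * θ)) * h
  rw [sum_congr rfl fun k _ => hG k, sum_range_sub]
  simp [G, lommelCoeff, lommelA_eq_zero_of_le hn le_rfl]

lemma lommelF_pi_div_two (hν : ∀ m : ℤ, ν ≠ m) (n : ℕ) :
    lommelF n ν (π / 2) = ∑ k ∈ range n, lommelA n k ν := by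
  refine sum_congr rfl fun k _ => ?_
  rw [← mul_div_assoc, mul_div_assoc, div_self (sin_mul_pi_div_two_ne_zero hν n k), mul_one]

end LommelF

theorem stmt15 (n : ℕ) (hn : 1 ≤ n) (ν : ℝ) (hν : ∀ m : ℤ, ν ≠ m) :
    (∀ θ : ℝ,
      Real.sin θ * iteratedDeriv 2 (lommelF n ν) θ -
        2 * ((n : ℝ) - 1) * Real.cos θ * deriv (lommelF n ν) θ -
        (((n : ℝ) - 1) ^ 2 - ν ^ 2) * Real.sin θ * lommelF n ν θ = 0) ∧
    lommelF n ν (π / 2) = 1 ∧ lommelF n ν 0 = 0 :=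
  ⟨lommelF_ode hν hn, by rw [lommelF_pi_div_two hν, sum_lommelA hν hn], by simp [lommelF]⟩
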